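/- arXiv:1601.04249 — 2 statements merged into one kernel-verified Lean document; each statement's English description precedes it below -/
import Mathlib

section
/- For every integer base β ≥ 2 and every finite list of natural numbers X_1, …, X_K, the sum of the numbers equals the sum of their multi-number carry value transformation and their multi-number XOR: X_1 + X_2 + ⋯ + X_K = CVT_β(X_1, …, X_K) + XOR_β(X_1, …, X_K). -/
/-- The `i`-th base-`β` digit of `X`. -/
def digit (β X i : ℕ) : ℕ := X / β ^ i % β

/-- Column sum at digit position `i` of a list of naturals in base `β`. -/
def colSum (β : ℕ) (L : List ℕ) (i : ℕ) : ℕ := (L.map fun X => digit β X i).sum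

/-- Multi-number XOR in base `β`. -/
noncomputable def XORb (β : ℕ) (L : List ℕ) : ℕ := ∑ᶠ i : ℕ, (colSum β L i % β) * β ^ i

/-- Multi-number carry value transformation in base `β`. -/
noncomputable def CVTb (β : ℕ) (L : List ℕ) : ℕ := ∑ᶠ i : ℕ, (colSum β L i / β) * β ^ (i + 1)

/-!
Expanding every `X ∈ L` in base `β` and summing column by column gives
`L.sum = ∑ i, colSum β L i * β ^ i`. Splitting each column sum as `c = β * (c / β) + c % β`
turns the `i`-th term into the `i`-th XOR digit plus the carry `c / β` moved to position `i + 1`.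
-/

open Finset

theorem finsum_eq_sum_range_of_eq_zero {M : Type*} [AddCommMonoid M] {f : ℕ → M} {N : ℕ}
    (h : ∀ i, N ≤ i → f i = 0) : ∑ᶠ i, f i = ∑ i ∈ range N, f i :=
  finsum_eq_finsetSum_of_support_subset f fun i hi => by
    by_contra hiN
    exact hi (h i (by simpa using hiN))

theorem sum_range_digit_mul_pow (β X N : ℕ) :
    ∑ i ∈ range N, digit β X i * β ^ i = X % β ^ N := by
  induction N with
  | zero => simp [Nat.mod_one]
  | succ n ih =>
    rw [sum_range_succ, ih, pow_succ, Nat.mod_mul, digit]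
    ring

theorem digit_eq_zero_of_lt_pow {β X i : ℕ} (h : X < β ^ i) : digit β X i = 0 := by
  simp [digit, Nat.div_eq_of_lt h]

theorem list_sum_eq_sum_range_colSum_mul_pow {β N : ℕ} {L : List ℕ}
    (h : ∀ X ∈ L, X < β ^ N) : L.sum = ∑ i ∈ range N, colSum β L i * β ^ i := by
  induction L with
  | nil => simp [colSum]
  | cons X L ih =>
    simp only [List.forall_mem_cons] at h
    simp only [List.sum_cons, ih h.2, colSum, List.map_cons, add_mul, sum_add_distrib,
      sum_range_digit_mul_pow, Nat.mod_eq_of_lt h.1]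

theorem colSum_eq_zero_of_lt_pow {β N i : ℕ} {L : List ℕ} (hβ : 0 < β) (hi : N ≤ i)
    (h : ∀ X ∈ L, X < β ^ N) : colSum β L i = 0 := by
  refine List.sum_eq_zero fun d hd => ?_
  obtain ⟨X, hX, rfl⟩ := List.mem_map.1 hd
  exact digit_eq_zero_of_lt_pow ((h X hX).trans_le (Nat.pow_le_pow_right hβ hi))

theorem stmt_0 (β : ℕ) (hβ : 2 ≤ β) (L : List ℕ) :
    L.sum = CVTb β L + XORb β L := by
  set N := L.sum
  have hlt : ∀ X ∈ L, X < β ^ N := fun X hX =>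
    (List.le_sum_of_mem hX).trans_lt (Nat.lt_pow_self (by omega))
  have hcol : ∀ i, N ≤ i → colSum β L i = 0 := fun i hi =>
    colSum_eq_zero_of_lt_pow (by omega) hi hlt
  refine (list_sum_eq_sum_range_colSum_mul_pow hlt).trans ?_
  rw [CVTb, XORb, finsum_eq_sum_range_of_eq_zero (N := N) (by simp +contextual [hcol]),
    finsum_eq_sum_range_of_eq_zero (N := N) (by simp +contextual [hcol]), ← sum_add_distrib]
  refine sum_congr rfl fun i _ => ?_
  conv_lhs => rw [← Nat.div_add_mod (colSum β L i) β]
  ring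
end

section
/- For every integer base β ≥ 2, natural numbers X_1, …, X_n, and every scalar K that is a power of β (K = β^m for some m ≥ 0), if CVT_β(X_1, …, X_n) = P then CVT_β(K·X_1, K·X_2, …, K·X_n) = K·P. -/
/-! Multiplying by `β ^ m` shifts every base-`β` digit up by `m` places and fills the lowest `m`
digits with zeros. So the column sums of the scaled list are those of the original list shifted by
`m`, and each summand of the carry value transformation is shifted by `m` and multiplied by
`β ^ m`. -/

theorem finsum_eq_finsum_add_of_eq_zero_of_lt {M : Type*} [AddCommMonoid M] {f : ℕ → M} {m : ℕ}
    (hf : ∀ j < m, f j = 0) : ∑ᶠ j, f j = ∑ᶠ i, f (i + m) := by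
  rw [← finsum_mem_range (add_left_injective m), ← finsum_mem_univ]
  refine finsum_mem_inter_support_eq' f _ _ fun j hj => ?_
  have hmj : m ≤ j := not_lt.mp fun h => hj (hf j h)
  exact ⟨fun _ => ⟨j - m, Nat.sub_add_cancel hmj⟩, fun _ => Set.mem_univ j⟩

section Digits

variable {β : ℕ}

theorem digit_pow_mul_of_lt (hβ : 0 < β) (X : ℕ) {m j : ℕ} (hj : j < m) :
    digit β (β ^ m * X) j = 0 := by
  have hsplit : β ^ m * X = β ^ j * (β ^ (m - j) * X) := by
    rw [← mul_assoc, ← pow_add, Nat.add_sub_cancel' hj.le]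
  rw [digit, hsplit, Nat.mul_div_cancel_left _ (pow_pos hβ j)]
  exact Nat.mod_eq_zero_of_dvd (dvd_mul_of_dvd_left (dvd_pow_self β (Nat.sub_ne_zero_of_lt hj)) X)

theorem digit_pow_mul_add (hβ : 0 < β) (X m i : ℕ) :
    digit β (β ^ m * X) (i + m) = digit β X i := by
  rw [digit, digit, pow_add, mul_comm (β ^ i), Nat.mul_div_mul_left _ _ (pow_pos hβ m)]

theorem colSum_map_pow_mul_of_lt (hβ : 0 < β) (L : List ℕ) {m j : ℕ} (hj : j < m) :
    colSum β (L.map (β ^ m * ·)) j = 0 := by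
  simp [colSum, Function.comp_def, digit_pow_mul_of_lt hβ _ hj]

theorem colSum_map_pow_mul_add (hβ : 0 < β) (L : List ℕ) (m i : ℕ) :
    colSum β (L.map (β ^ m * ·)) (i + m) = colSum β L i := by
  simp [colSum, Function.comp_def, digit_pow_mul_add hβ]

end Digits

theorem stmt_7 (β : ℕ) (hβ : 2 ≤ β) (L : List ℕ) (K m P : ℕ) (hK : K = β ^ m)
    (hP : CVTb β L = P) :
    CVTb β (L.map fun X => K * X) = K * P := by
  subst hK hP
  have hβ₀ : 0 < β := by omega
  calc CVTb β (L.map (β ^ m * ·))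
      = ∑ᶠ i, colSum β (L.map (β ^ m * ·)) (i + m) / β * β ^ (i + m + 1) :=
        finsum_eq_finsum_add_of_eq_zero_of_lt fun j hj => by
          rw [colSum_map_pow_mul_of_lt hβ₀ L hj, Nat.zero_div, zero_mul]
    _ = ∑ᶠ i, β ^ m * (colSum β L i / β * β ^ (i + 1)) := by
        refine finsum_congr fun i => ?_
        rw [colSum_map_pow_mul_add hβ₀]
        ring
    _ = β ^ m * CVTb β L := (mul_finsum _ _).symm
end
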